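/- arXiv:2510.24228 — 4 statements merged into one kernel-verified Lean document; each statement's English description precedes it below -/
import Mathlib

section
/- If each sigma point is propagated through an affine map 𝒳_i⁻ = F 𝒳_i + B u and x̂⁻ = F x̂ + B u, then the UKF predicted covariance equals the Kalman Filter predicted covariance: Σ_{i=0}^{2n} w_i^(c) (𝒳_i⁻ − x̂⁻)(𝒳_i⁻ − x̂⁻)ᵀ + Q = F P Fᵀ + Q. -/
open Matrix

/-- If each sigma point is propagated through an affine map
`𝒳ᵢ⁻ = F 𝒳ᵢ + B u` and `x̂⁻ = F x̂ + B u`, then the UKF predicted covariance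
equals the Kalman Filter predicted covariance:
`∑_{i=0}^{2n} wᵢ^(c) (𝒳ᵢ⁻ − x̂⁻)(𝒳ᵢ⁻ − x̂⁻)ᵀ + Q = F P Fᵀ + Q`. -/
theorem ukf_affine_predicted_covariance
    (n m : ℕ) (hn : 1 ≤ n) (α β : ℝ) (hα : α ≠ 0)
    (lam η : ℝ) (hlam : lam = (n : ℝ) * (α ^ 2 - 1))
    (hη : η = Real.sqrt ((n : ℝ) + lam))
    (xhat : Fin n → ℝ) (P S : Matrix (Fin n) (Fin n) ℝ)
    (hP : P.PosSemidef) (hS : S * Sᵀ = P)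
    (X : ℕ → Fin n → ℝ)
    (hX0 : X 0 = xhat)
    (hXp : ∀ i : Fin n, X ((i : ℕ) + 1) = fun j => xhat j + η * S j i)
    (hXm : ∀ i : Fin n, X (n + 1 + (i : ℕ)) = fun j => xhat j - η * S j i)
    (wc : ℕ → ℝ)
    (hwc0 : wc 0 = lam / ((n : ℝ) + lam) + (1 - α ^ 2 + β ^ 2))
    (hwci : ∀ i, 1 ≤ i → i ≤ 2 * n → wc i = 1 / (2 * ((n : ℝ) + lam)))
    (F : Matrix (Fin n) (Fin n) ℝ) (B : Matrix (Fin n) (Fin m) ℝ)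
    (u : Fin m → ℝ) (Q : Matrix (Fin n) (Fin n) ℝ)
    (Xpred : ℕ → Fin n → ℝ)
    (hXpred : ∀ i, Xpred i = F.mulVec (X i) + B.mulVec u)
    (xpred : Fin n → ℝ) (hxpred : xpred = F.mulVec xhat + B.mulVec u) :
    (∑ i ∈ Finset.range (2 * n + 1),
        wc i • Matrix.vecMulVec (Xpred i - xpred) (Xpred i - xpred)) + Q
      = F * P * Fᵀ + Q := by
  have hnpos : (0:ℝ) < n := by exact_mod_cast hn
  have hnl : (n:ℝ) + lam = n * α ^ 2 := by rw [hlam]; ring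
  have hnlpos : 0 < (n:ℝ) + lam := by rw [hnl]; positivity
  have hη2 : η * η = (n:ℝ) + lam := by
    rw [hη]; exact Real.mul_self_sqrt hnlpos.le
  have hdiff : ∀ i, Xpred i - xpred = F.mulVec (X i - xhat) := by
    intro i
    rw [hXpred, hxpred, Matrix.mulVec_sub]
    abel
  have hvv : ∀ v : Fin n → ℝ, vecMulVec (F.mulVec v) (F.mulVec v)
      = F * vecMulVec v v * Fᵀ := by
    intro v
    ext j k
    simp only [vecMulVec_apply, Matrix.mul_apply, Matrix.mulVec, dotProduct,
      transpose_apply, Finset.sum_mul, Finset.mul_sum]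
    apply Finset.sum_congr rfl
    intros; apply Finset.sum_congr rfl; intros; ring
  -- the inner sum equals P
  have hinner : (∑ i ∈ Finset.range (2 * n + 1),
      wc i • Matrix.vecMulVec (X i - xhat) (X i - xhat)) = P := by
    rw [Finset.sum_range_succ']
    have h0 : X 0 - xhat = 0 := by rw [hX0]; simp
    have hz : vecMulVec (0 : Fin n → ℝ) (0 : Fin n → ℝ) = 0 := by
      ext j k; simp [vecMulVec_apply]
    rw [h0, hz, smul_zero, add_zero]
    have h2n : 2 * n = n + n := by ring
    rw [h2n, Finset.sum_range_add,
      ← Fin.sum_univ_eq_sum_range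
        (fun i => wc (i + 1) • vecMulVec (X (i + 1) - xhat) (X (i + 1) - xhat)),
      ← Fin.sum_univ_eq_sum_range
        (fun i => wc (n + i + 1) •
          vecMulVec (X (n + i + 1) - xhat) (X (n + i + 1) - xhat)),
      ← Finset.sum_add_distrib, ← hS]
    have key : ∀ i : Fin n,
        wc ((i : ℕ) + 1) • vecMulVec (X ((i : ℕ) + 1) - xhat) (X ((i : ℕ) + 1) - xhat)
        + wc (n + (i : ℕ) + 1) •
            vecMulVec (X (n + (i : ℕ) + 1) - xhat) (X (n + (i : ℕ) + 1) - xhat)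
        = vecMulVec (fun j => S j i) (fun j => S j i) := by
      intro i
      have e1 : X ((i : ℕ) + 1) - xhat = η • fun j => S j i := by
        rw [hXp i]; funext j; simp [mul_comm]
      have e2 : X (n + (i : ℕ) + 1) - xhat = (-η) • fun j => S j i := by
        have hidx : n + (i : ℕ) + 1 = n + 1 + (i : ℕ) := by ring
        rw [hidx, hXm i]; funext j
        simp only [Pi.sub_apply, Pi.smul_apply, smul_eq_mul]
        ring
      have w1 : wc ((i : ℕ) + 1) = 1 / (2 * ((n : ℝ) + lam)) :=
        hwci _ (Nat.le_add_left 1 _) (by omega)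
      have w2 : wc (n + (i : ℕ) + 1) = 1 / (2 * ((n : ℝ) + lam)) :=
        hwci _ (by omega) (by omega)
      rw [e1, e2, w1, w2]
      ext j k
      simp only [Matrix.add_apply, Matrix.smul_apply, vecMulVec_apply,
        Pi.smul_apply, smul_eq_mul]
      have hne : (n:ℝ) + lam ≠ 0 := hnlpos.ne'
      field_simp
      ring_nf
      linear_combination (2 * S j i * S k i) * hη2
    rw [Finset.sum_congr rfl fun i _ => key i]
    ext j k
    simp [Matrix.sum_apply, vecMulVec_apply, Matrix.mul_apply]
  calc (∑ i ∈ Finset.range (2 * n + 1),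
        wc i • Matrix.vecMulVec (Xpred i - xpred) (Xpred i - xpred)) + Q
      = (∑ i ∈ Finset.range (2 * n + 1),
        F * (wc i • Matrix.vecMulVec (X i - xhat) (X i - xhat)) * Fᵀ) + Q := by
        congr 1
        apply Finset.sum_congr rfl
        intro i _
        rw [hdiff, hvv, Matrix.mul_smul, Matrix.smul_mul]
    _ = F * P * Fᵀ + Q := by
        rw [← Finset.sum_mul, ← Finset.mul_sum, hinner]
end

section
/- If the measurement function is linear, g(x) = G x, and ŷ = G x̂, then the UKF innovation covariance equals the linear Kalman Filter innovation covariance: Σ_{i=0}^{2n} w_i^(c) (G 𝒳_i − ŷ)(G 𝒳_i − ŷ)ᵀ + R = G P Gᵀ + R. -/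
open Matrix

/-- If the measurement function is linear, `g(x) = G x`, and `ŷ = G x̂`, then
the UKF innovation covariance equals the linear Kalman Filter innovation
covariance: `∑_{i=0}^{2n} wᵢ^(c) (G 𝒳ᵢ − ŷ)(G 𝒳ᵢ − ŷ)ᵀ + R = G P Gᵀ + R`. -/
theorem ukf_linear_innovation_covariance
    (n p : ℕ) (hn : 1 ≤ n) (α β : ℝ) (hα : α ≠ 0)
    (lam η : ℝ) (hlam : lam = (n : ℝ) * (α ^ 2 - 1))
    (hη : η = Real.sqrt ((n : ℝ) + lam))
    (xhat : Fin n → ℝ) (P S : Matrix (Fin n) (Fin n) ℝ)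
    (hP : P.PosSemidef) (hS : S * Sᵀ = P)
    (X : ℕ → Fin n → ℝ)
    (hX0 : X 0 = xhat)
    (hXp : ∀ i : Fin n, X ((i : ℕ) + 1) = fun j => xhat j + η * S j i)
    (hXm : ∀ i : Fin n, X (n + 1 + (i : ℕ)) = fun j => xhat j - η * S j i)
    (wc : ℕ → ℝ)
    (hwc0 : wc 0 = lam / ((n : ℝ) + lam) + (1 - α ^ 2 + β ^ 2))
    (hwci : ∀ i, 1 ≤ i → i ≤ 2 * n → wc i = 1 / (2 * ((n : ℝ) + lam)))
    (G : Matrix (Fin p) (Fin n) ℝ) (R : Matrix (Fin p) (Fin p) ℝ)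
    (yhat : Fin p → ℝ) (hyhat : yhat = G.mulVec xhat) :
    (∑ i ∈ Finset.range (2 * n + 1),
        wc i • Matrix.vecMulVec (G.mulVec (X i) - yhat)
          (G.mulVec (X i) - yhat)) + R
      = G * P * Gᵀ + R := by
  have hnl : (0:ℝ) < (n:ℝ) + lam := by
    have h1 : (1:ℝ) ≤ (n:ℝ) := by exact_mod_cast hn
    have h : (n:ℝ) + (n:ℝ) * (α^2 - 1) = (n:ℝ) * α^2 := by ring
    rw [hlam, h]
    positivity
  have hη2 : η * η = (n : ℝ) + lam := by rw [hη]; exact Real.mul_self_sqrt hnl.le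
  subst hyhat
  have key : (G * P * Gᵀ) = (G * S) * (G * S)ᵀ := by
    rw [Matrix.transpose_mul, ← Matrix.mul_assoc, Matrix.mul_assoc G S Sᵀ, hS]
  rw [key]
  congr 1
  -- key per-column computations
  have hplus : ∀ (i : Fin n) (j : Fin p),
      G.mulVec (X ((i:ℕ)+1)) j - G.mulVec xhat j = η * (G * S) j i := by
    intro i j
    rw [hXp i]
    simp [Matrix.mulVec, dotProduct, Matrix.mul_apply, mul_add, Finset.sum_add_distrib,
      Finset.mul_sum, mul_left_comm]
  have hminus : ∀ (i : Fin n) (j : Fin p),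
      G.mulVec (X (n + 1 + (i:ℕ))) j - G.mulVec xhat j = -(η * (G * S) j i) := by
    intro i j
    rw [hXm i]
    simp [Matrix.mulVec, dotProduct, Matrix.mul_apply, mul_sub, Finset.sum_sub_distrib,
      Finset.mul_sum, mul_left_comm, sub_sub_eq_add_sub]
  ext j k
  simp only [Matrix.sum_apply, Matrix.smul_apply, Matrix.vecMulVec_apply, Pi.sub_apply,
    smul_eq_mul, Matrix.mul_apply (M := G * S), Matrix.transpose_apply]
  rw [show 2*n+1 = n+n+1 by ring, Finset.sum_range_succ', Finset.sum_range_add]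
  rw [hX0]
  simp only [sub_self, mul_zero, zero_mul, add_zero]
  rw [← Fin.sum_univ_eq_sum_range
      (fun i => wc (i+1) * ((G.mulVec (X (i+1)) j - G.mulVec xhat j) *
        (G.mulVec (X (i+1)) k - G.mulVec xhat k))) n,
    ← Fin.sum_univ_eq_sum_range
      (fun i => wc (n+i+1) * ((G.mulVec (X (n+i+1)) j - G.mulVec xhat j) *
        (G.mulVec (X (n+i+1)) k - G.mulVec xhat k))) n,
    ← Finset.sum_add_distrib]
  refine Finset.sum_congr rfl fun i _ => ?_
  have hi1 : n + (i:ℕ) + 1 = n + 1 + (i:ℕ) := by ring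
  have hw1 : wc ((i:ℕ)+1) = 1 / (2 * ((n:ℝ) + lam)) :=
    hwci _ (Nat.le_add_left 1 i) (by omega)
  have hw2 : wc (n + (i:ℕ) + 1) = 1 / (2 * ((n:ℝ) + lam)) :=
    hwci _ (by omega) (by omega)
  rw [hw1, hw2, hi1, hplus i j, hplus i k, hminus i j, hminus i k, neg_mul_neg]
  have ha : η * ((G * S) j i) * (η * ((G * S) k i))
      = ((n:ℝ) + lam) * ((G * S) j i * (G * S) k i) := by rw [← hη2]; ring
  rw [ha]
  field_simp
  ring
end

section
/- If the measurement function is linear, g(x) = G x, and ŷ = G x̂, then the UKF state–measurement cross-covariance equals P Gᵀ: Σ_{i=0}^{2n} w_i^(c) (𝒳_i − x̂)(G 𝒳_i − ŷ)ᵀ = P Gᵀ. -/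
open Matrix

/-- If the measurement function is linear, `g(x) = G x`, and `ŷ = G x̂`, then
the UKF state–measurement cross-covariance equals `P Gᵀ`:
`∑_{i=0}^{2n} wᵢ^(c) (𝒳ᵢ − x̂)(G 𝒳ᵢ − ŷ)ᵀ = P Gᵀ`. -/
theorem ukf_linear_cross_covariance
    (n p : ℕ) (hn : 1 ≤ n) (α β : ℝ) (hα : α ≠ 0)
    (lam η : ℝ) (hlam : lam = (n : ℝ) * (α ^ 2 - 1))
    (hη : η = Real.sqrt ((n : ℝ) + lam))
    (xhat : Fin n → ℝ) (P S : Matrix (Fin n) (Fin n) ℝ)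
    (hP : P.PosSemidef) (hS : S * Sᵀ = P)
    (X : ℕ → Fin n → ℝ)
    (hX0 : X 0 = xhat)
    (hXp : ∀ i : Fin n, X ((i : ℕ) + 1) = fun j => xhat j + η * S j i)
    (hXm : ∀ i : Fin n, X (n + 1 + (i : ℕ)) = fun j => xhat j - η * S j i)
    (wc : ℕ → ℝ)
    (hwc0 : wc 0 = lam / ((n : ℝ) + lam) + (1 - α ^ 2 + β ^ 2))
    (hwci : ∀ i, 1 ≤ i → i ≤ 2 * n → wc i = 1 / (2 * ((n : ℝ) + lam)))
    (G : Matrix (Fin p) (Fin n) ℝ)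
    (yhat : Fin p → ℝ) (hyhat : yhat = G.mulVec xhat) :
    ∑ i ∈ Finset.range (2 * n + 1),
        wc i • Matrix.vecMulVec (X i - xhat) (G.mulVec (X i) - yhat)
      = P * Gᵀ := by
  
  have hn' : (0:ℝ) < (n:ℝ) := by exact_mod_cast hn
  have hnl : (n:ℝ) + lam = (n:ℝ) * α ^ 2 := by rw [hlam]; ring
  have hpos : (0:ℝ) < (n:ℝ) + lam := by
    rw [hnl]; positivity
  have hη2 : η * η = (n:ℝ) + lam := by
    rw [hη]; exact Real.mul_self_sqrt hpos.le
  subst hyhat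
  ext j k
  rw [Matrix.sum_apply, Finset.sum_range_succ', two_mul, Finset.sum_range_add,
    ← Finset.sum_add_distrib]
  have h0 : (wc 0 • Matrix.vecMulVec (X 0 - xhat) (G.mulVec (X 0) - G.mulVec xhat)) j k = 0 := by
    simp [hX0, Matrix.vecMulVec_apply]
  rw [h0, add_zero]
  rw [← Fin.sum_univ_eq_sum_range (fun i =>
    (wc (i + 1) • Matrix.vecMulVec (X (i + 1) - xhat) (G.mulVec (X (i + 1)) - G.mulVec xhat)) j k
    + (wc (n + i + 1) • Matrix.vecMulVec (X (n + i + 1) - xhat)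
        (G.mulVec (X (n + i + 1)) - G.mulVec xhat)) j k)]
  have hrhs : (P * Gᵀ) j k = ∑ i : Fin n, S j i * ∑ m, G k m * S m i := by
    rw [← hS]
    simp only [Matrix.mul_apply, Matrix.transpose_apply, Finset.sum_mul, Finset.mul_sum]
    rw [Finset.sum_comm]
    exact Finset.sum_congr rfl fun i _ => Finset.sum_congr rfl fun m _ => by ring
  rw [hrhs]
  apply Finset.sum_congr rfl
  intro i _
  have hi := i.2
  have h1 : wc ((i:ℕ)+1) = 1/(2*((n:ℝ)+lam)) := hwci _ (by omega) (by omega)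
  have h2 : wc (n+(i:ℕ)+1) = 1/(2*((n:ℝ)+lam)) := hwci _ (by omega) (by omega)
  have e2 : n + (i:ℕ) + 1 = n + 1 + (i:ℕ) := by omega
  rw [e2] at h2 ⊢
  simp only [hXp i, hXm i, h1, h2, Matrix.smul_apply, Matrix.vecMulVec_apply, Pi.sub_apply,
    Matrix.mulVec, dotProduct, smul_eq_mul]
  have hsum1 : ∑ m, G k m * (xhat m + η * S m i)
      = (∑ m, G k m * xhat m) + η * ∑ m, G k m * S m i := by
    rw [Finset.mul_sum, ← Finset.sum_add_distrib]; exact Finset.sum_congr rfl fun m _ => by ring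
  have hsum2 : ∑ m, G k m * (xhat m - η * S m i)
      = (∑ m, G k m * xhat m) - η * ∑ m, G k m * S m i := by
    rw [Finset.mul_sum, ← Finset.sum_sub_distrib]; exact Finset.sum_congr rfl fun m _ => by ring
  rw [hsum1, hsum2]
  field_simp
  ring_nf
  rw [show η ^ 2 = η * η by ring, hη2]
  ring
end

section
/- If the measurement function is linear, g(x) = G x, and the innovation covariance G P Gᵀ + R is invertible, then the UKF Kalman gain equals the linear Kalman Filter gain: with ŷ = Σ_i w_i^(m) G 𝒳_i, P_yy = Σ_i w_i^(c)(G 𝒳_i − ŷ)(G 𝒳_i − ŷ)ᵀ + R, and P_xy = Σ_i w_i^(c)(𝒳_i − x̂)(G 𝒳_i − ŷ)ᵀ, one has K := P_xy P_yy⁻¹ = P Gᵀ (G P Gᵀ + R)⁻¹. -/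
open Matrix

/-- If the measurement function is linear, `g(x) = G x`, and the innovation
covariance `G P Gᵀ + R` is invertible, then the UKF Kalman gain equals the
linear Kalman Filter gain: with `ŷ = ∑ᵢ wᵢ^(m) G 𝒳ᵢ`,
`P_yy = ∑ᵢ wᵢ^(c)(G 𝒳ᵢ − ŷ)(G 𝒳ᵢ − ŷ)ᵀ + R`, and
`P_xy = ∑ᵢ wᵢ^(c)(𝒳ᵢ − x̂)(G 𝒳ᵢ − ŷ)ᵀ`, one has
`K := P_xy P_yy⁻¹ = P Gᵀ (G P Gᵀ + R)⁻¹`. -/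
theorem ukf_linear_kalman_gain
    (n p : ℕ) (hn : 1 ≤ n) (α β : ℝ) (hα : α ≠ 0)
    (lam η : ℝ) (hlam : lam = (n : ℝ) * (α ^ 2 - 1))
    (hη : η = Real.sqrt ((n : ℝ) + lam))
    (xhat : Fin n → ℝ) (P S : Matrix (Fin n) (Fin n) ℝ)
    (hP : P.PosSemidef) (hS : S * Sᵀ = P)
    (X : ℕ → Fin n → ℝ)
    (hX0 : X 0 = xhat)
    (hXp : ∀ i : Fin n, X ((i : ℕ) + 1) = fun j => xhat j + η * S j i)
    (hXm : ∀ i : Fin n, X (n + 1 + (i : ℕ)) = fun j => xhat j - η * S j i)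
    (wm : ℕ → ℝ)
    (hwm0 : wm 0 = lam / ((n : ℝ) + lam))
    (hwmi : ∀ i, 1 ≤ i → i ≤ 2 * n → wm i = 1 / (2 * ((n : ℝ) + lam)))
    (wc : ℕ → ℝ)
    (hwc0 : wc 0 = lam / ((n : ℝ) + lam) + (1 - α ^ 2 + β ^ 2))
    (hwci : ∀ i, 1 ≤ i → i ≤ 2 * n → wc i = 1 / (2 * ((n : ℝ) + lam)))
    (G : Matrix (Fin p) (Fin n) ℝ) (R : Matrix (Fin p) (Fin p) ℝ)
    (hinv : IsUnit (G * P * Gᵀ + R))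
    (yhat : Fin p → ℝ)
    (hyhat : yhat = ∑ i ∈ Finset.range (2 * n + 1), wm i • G.mulVec (X i))
    (Pyy : Matrix (Fin p) (Fin p) ℝ)
    (hPyy : Pyy = (∑ i ∈ Finset.range (2 * n + 1),
        wc i • Matrix.vecMulVec (G.mulVec (X i) - yhat)
          (G.mulVec (X i) - yhat)) + R)
    (Pxy : Matrix (Fin n) (Fin p) ℝ)
    (hPxy : Pxy = ∑ i ∈ Finset.range (2 * n + 1),
        wc i • Matrix.vecMulVec (X i - xhat) (G.mulVec (X i) - yhat)) :
    Pxy * Pyy⁻¹ = P * Gᵀ * (G * P * Gᵀ + R)⁻¹ := by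
  have hn0 : (0:ℝ) < n := by exact_mod_cast hn
  have hpos : (0:ℝ) < (n:ℝ) + lam := by
    rw [hlam, show (n:ℝ) + (n:ℝ) * (α ^ 2 - 1) = (n:ℝ) * α ^ 2 by ring]
    positivity
  have hne : ((n:ℝ) + lam) ≠ 0 := hpos.ne'
  have hη2 : η ^ 2 = (n:ℝ) + lam := by
    rw [hη]; exact Real.sq_sqrt hpos.le
  -- splitting lemma for sums over `range (2n+1)`
  have hsplit : ∀ (f : ℕ → ℝ), (∑ i ∈ Finset.range (2 * n + 1), f i)
      = f 0 + ((∑ i : Fin n, f ((i : ℕ) + 1)) + ∑ i : Fin n, f (n + 1 + (i : ℕ))) := by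
    intro f
    rw [Finset.sum_range_succ', show 2 * n = n + n by ring,
      Finset.sum_range_add,
      ← Fin.sum_univ_eq_sum_range (fun i => f (i + 1)) n,
      ← Fin.sum_univ_eq_sum_range (fun i => f (n + i + 1)) n]
    have : ∀ i : Fin n, f (n + (i : ℕ) + 1) = f (n + 1 + (i : ℕ)) := fun i => by
      rw [show n + (i : ℕ) + 1 = n + 1 + (i : ℕ) by omega]
    rw [Finset.sum_congr rfl fun i _ => this i]
    ring
  -- the weighted sigma-point mean is xhat
  have hxhat : (∑ i ∈ Finset.range (2 * n + 1), wm i • X i) = xhat := by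
    funext j
    rw [Finset.sum_apply]
    simp only [Pi.smul_apply, smul_eq_mul]
    rw [hsplit (fun i => wm i * X i j)]
    have e1 : (∑ i : Fin n, wm ((i : ℕ) + 1) * X ((i : ℕ) + 1) j)
        = ∑ i : Fin n, (1 / (2 * ((n:ℝ) + lam))) * (xhat j + η * S j i) := by
      refine Finset.sum_congr rfl fun i _ => ?_
      have hi := i.isLt
      rw [hwmi _ (by omega) (by omega), hXp i]
    have e2 : (∑ i : Fin n, wm (n + 1 + (i : ℕ)) * X (n + 1 + (i : ℕ)) j)
        = ∑ i : Fin n, (1 / (2 * ((n:ℝ) + lam))) * (xhat j - η * S j i) := by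
      refine Finset.sum_congr rfl fun i _ => ?_
      have hi := i.isLt
      rw [hwmi _ (by omega) (by omega), hXm i]
    rw [e1, e2, ← Finset.sum_add_distrib]
    have e3 : ∀ i : Fin n,
        (1 / (2 * ((n:ℝ) + lam))) * (xhat j + η * S j i)
          + (1 / (2 * ((n:ℝ) + lam))) * (xhat j - η * S j i)
        = xhat j / ((n:ℝ) + lam) := fun i => by field_simp; ring
    rw [Finset.sum_congr rfl fun i _ => e3 i, Finset.sum_const, Finset.card_univ,
      Fintype.card_fin, nsmul_eq_mul, hX0, hwm0]
    show lam / ((n:ℝ) + lam) * xhat j + (n:ℝ) * (xhat j / ((n:ℝ) + lam)) = xhat j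
    field_simp
    ring
  -- hence yhat = G xhat
  have hyhat' : yhat = G.mulVec xhat := by
    rw [hyhat]
    funext j
    rw [Finset.sum_apply, ← hxhat]
    simp only [Matrix.mulVec, dotProduct, Pi.smul_apply, Finset.sum_apply,
      smul_eq_mul, Finset.mul_sum]
    rw [Finset.sum_comm]
    exact Finset.sum_congr rfl fun i _ => Finset.sum_congr rfl fun a _ => by ring
  -- the weighted sigma-point covariance is P
  have hQ : (∑ i ∈ Finset.range (2 * n + 1),
      wc i • Matrix.vecMulVec (X i - xhat) (X i - xhat)) = P := by
    ext j k
    rw [Matrix.sum_apply]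
    simp only [Matrix.smul_apply, Matrix.vecMulVec_apply, Pi.sub_apply, smul_eq_mul]
    rw [hsplit (fun i => wc i * ((X i j - xhat j) * (X i k - xhat k)))]
    have e1 : (∑ i : Fin n,
        wc ((i : ℕ) + 1) * ((X ((i : ℕ) + 1) j - xhat j) * (X ((i : ℕ) + 1) k - xhat k)))
        = ∑ i : Fin n, (1 / (2 * ((n:ℝ) + lam))) * (η * S j i * (η * S k i)) := by
      refine Finset.sum_congr rfl fun i _ => ?_
      have hi := i.isLt
      rw [hwci _ (by omega) (by omega), hXp i]
      ring_nf
    have e2 : (∑ i : Fin n,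
        wc (n + 1 + (i : ℕ)) * ((X (n + 1 + (i : ℕ)) j - xhat j) * (X (n + 1 + (i : ℕ)) k - xhat k)))
        = ∑ i : Fin n, (1 / (2 * ((n:ℝ) + lam))) * (η * S j i * (η * S k i)) := by
      refine Finset.sum_congr rfl fun i _ => ?_
      have hi := i.isLt
      rw [hwci _ (by omega) (by omega), hXm i]
      ring_nf
    rw [e1, e2, hX0, ← Finset.sum_add_distrib]
    have e3 : ∀ i : Fin n,
        (1 / (2 * ((n:ℝ) + lam))) * (η * S j i * (η * S k i))
          + (1 / (2 * ((n:ℝ) + lam))) * (η * S j i * (η * S k i))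
        = S j i * S k i := fun i => by
      have : η * S j i * (η * S k i) = η ^ 2 * (S j i * S k i) := by ring
      rw [this, hη2]
      field_simp
      ring
    rw [Finset.sum_congr rfl fun i _ => e3 i]
    simp only [sub_self, mul_zero, zero_mul]
    rw [zero_add, ← hS, Matrix.mul_apply]
    exact Finset.sum_congr rfl fun i _ => by rw [Matrix.transpose_apply]
  -- measurement residual is linear
  have hGd : ∀ i, G.mulVec (X i) - yhat = G.mulVec (X i - xhat) := fun i => by
    rw [hyhat', Matrix.mulVec_sub]
  -- outer-product identities
  have hvv : ∀ u v : Fin n → ℝ,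
      Matrix.vecMulVec (G.mulVec u) (G.mulVec v) = G * Matrix.vecMulVec u v * Gᵀ := by
    intro u v
    rw [Matrix.vecMulVec_eq Unit, Matrix.vecMulVec_eq Unit, Matrix.replicateCol_mulVec,
      Matrix.replicateRow_mulVec, Matrix.transpose_mul, Matrix.transpose_replicateCol]
    simp only [Matrix.mul_assoc]
  have hv2 : ∀ u v : Fin n → ℝ,
      Matrix.vecMulVec u (G.mulVec v) = Matrix.vecMulVec u v * Gᵀ := by
    intro u v
    rw [Matrix.vecMulVec_eq Unit, Matrix.vecMulVec_eq Unit, Matrix.replicateRow_mulVec,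
      Matrix.transpose_mul, Matrix.transpose_replicateCol, Matrix.mul_assoc]
  -- Pyy = G P Gᵀ + R
  have hPyy' : Pyy = G * P * Gᵀ + R := by
    rw [hPyy]
    congr 1
    calc (∑ i ∈ Finset.range (2 * n + 1),
          wc i • Matrix.vecMulVec (G.mulVec (X i) - yhat) (G.mulVec (X i) - yhat))
        = ∑ i ∈ Finset.range (2 * n + 1),
          G * (wc i • Matrix.vecMulVec (X i - xhat) (X i - xhat)) * Gᵀ := by
          refine Finset.sum_congr rfl fun i _ => ?_
          rw [hGd, hvv, Matrix.mul_smul, Matrix.smul_mul]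
      _ = G * (∑ i ∈ Finset.range (2 * n + 1),
          wc i • Matrix.vecMulVec (X i - xhat) (X i - xhat)) * Gᵀ := by
          rw [Matrix.mul_sum, Matrix.sum_mul]
      _ = G * P * Gᵀ := by rw [hQ]
  -- Pxy = P Gᵀ
  have hPxy' : Pxy = P * Gᵀ := by
    rw [hPxy]
    calc (∑ i ∈ Finset.range (2 * n + 1),
          wc i • Matrix.vecMulVec (X i - xhat) (G.mulVec (X i) - yhat))
        = ∑ i ∈ Finset.range (2 * n + 1),
          (wc i • Matrix.vecMulVec (X i - xhat) (X i - xhat)) * Gᵀ := by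
          refine Finset.sum_congr rfl fun i _ => ?_
          rw [hGd, hv2, Matrix.smul_mul]
      _ = (∑ i ∈ Finset.range (2 * n + 1),
          wc i • Matrix.vecMulVec (X i - xhat) (X i - xhat)) * Gᵀ := by
          rw [Matrix.sum_mul]
      _ = P * Gᵀ := by rw [hQ]
  rw [hPxy', hPyy']
end
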